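/- arXiv:1909.05585 — 2 statements merged into one kernel-verified Lean document; each statement's English description precedes it below -/
import Mathlib

section
/- Let d ≥ 2 and let α > d − 2 or α ∈ ℝ \ ℤ. Then for every polynomial p on ℝᵈ, the function x ↦ p(x/|x|²)·|x|^{-α} on ℝᵈ \ {0} can be expressed as a finite real-linear combination of partial derivatives (of all orders) of the function x ↦ |x|^{-α}. -/
open Finset

/-- The partial derivative `∂_i` of a function on `ℝᵈ`, as a classical derivative. -/
noncomputable def pderiv {d : ℕ} (i : Fin d) (g : EuclideanSpace ℝ (Fin d) → ℝ) :
    EuclideanSpace ℝ (Fin d) → ℝ :=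
  fun x => fderiv ℝ g x (EuclideanSpace.single i 1)

/-- The iterated partial derivative `∂^β` associated to a multi-index `β : Fin d → ℕ`. -/
noncomputable def multiPderiv {d : ℕ} (β : Fin d → ℕ) (g : EuclideanSpace ℝ (Fin d) → ℝ) :
    EuclideanSpace ℝ (Fin d) → ℝ :=
  (List.finRange d).foldr (fun i h => (pderiv i)^[β i] h) g

/-!
Call a function admissible if off the origin it agrees with a finite linear combination of
partial derivatives of `|x|^{-α}`; admissible functions form a real vector space stable under
every `∂_i`. Since `p(Kx)|x|^{-α}` is a combination of the terms `x^m |x|^{-α-2|m|}`, it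
suffices to show by induction on `k` that `x^m |x|^{-α-2k}` is admissible whenever `|m| ≤ k`.
For `m = 0` this follows from `Δ|x|^t = t(t+d-2)|x|^{t-2}`, otherwise from
`∂_i(x^m |x|^t) = m_i x^{m-e_i} |x|^t + t x^{m+e_i} |x|^{t-2}`, both at `t = -(α+2k)`.
The hypotheses on `α` say precisely that the coefficients `t(t+d-2)` and `t` never vanish.
-/

open scoped ContDiff Topology
open Set (EqOn)

variable {d : ℕ}

local notation "E" => EuclideanSpace ℝ (Fin d)

section PartialDerivatives

variable {f g : EuclideanSpace ℝ (Fin d) → ℝ} {U : Set (EuclideanSpace ℝ (Fin d))}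
  {x : EuclideanSpace ℝ (Fin d)}

lemma HasFDerivAt.pderiv_eq {f' : E →L[ℝ] ℝ} (h : HasFDerivAt f f' x) (i : Fin d) :
    pderiv i f x = f' (EuclideanSpace.single i 1) := by
  rw [pderiv, h.fderiv]

lemma Filter.EventuallyEq.pderiv_eq (h : f =ᶠ[𝓝 x] g) (i : Fin d) :
    pderiv i f x = pderiv i g x := by
  rw [pderiv, pderiv, h.fderiv_eq]

lemma Set.EqOn.pderiv_of_isOpen (hU : IsOpen U) (h : EqOn f g U) (i : Fin d) :
    EqOn (pderiv i f) (pderiv i g) U := fun _ hx =>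
  (Filter.eventuallyEq_of_mem (hU.mem_nhds hx) h).pderiv_eq i

lemma Set.EqOn.iterate_pderiv_of_isOpen (hU : IsOpen U) (h : EqOn f g U) (i : Fin d) (n : ℕ) :
    EqOn ((pderiv i)^[n] f) ((pderiv i)^[n] g) U := by
  induction n with
  | zero => exact h
  | succ n ih => simpa only [Function.iterate_succ_apply'] using ih.pderiv_of_isOpen hU i

lemma ContDiffOn.pderiv_of_isOpen (hU : IsOpen U) (hf : ContDiffOn ℝ ∞ f U) (i : Fin d) :
    ContDiffOn ℝ ∞ (pderiv i f) U :=
  (hf.fderiv_of_isOpen hU (m := ∞) (by norm_cast)).clm_apply contDiffOn_const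

lemma ContDiffOn.iterate_pderiv_of_isOpen (hU : IsOpen U) (hf : ContDiffOn ℝ ∞ f U) (i : Fin d)
    (n : ℕ) : ContDiffOn ℝ ∞ ((pderiv i)^[n] f) U := by
  induction n with
  | zero => exact hf
  | succ n ih => simpa only [Function.iterate_succ_apply'] using ih.pderiv_of_isOpen hU i

lemma pderiv_pderiv_comm (hf : ContDiffAt ℝ 2 f x) (i j : Fin d) :
    pderiv i (pderiv j f) x = pderiv j (pderiv i f) x := by
  have hdf : DifferentiableAt ℝ (fderiv ℝ f) x :=
    (hf.fderiv_right le_rfl).differentiableAt one_ne_zero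
  have hsecond : ∀ v w : E,
      fderiv ℝ (fun y => fderiv ℝ f y v) x w = fderiv ℝ (fderiv ℝ f) x w v := fun v w => by
    simp [fderiv_clm_apply hdf (differentiableAt_const v)]
  change fderiv ℝ (fun y => fderiv ℝ f y _) x _ = fderiv ℝ (fun y => fderiv ℝ f y _) x _
  rw [hsecond, hsecond]
  exact hf.isSymmSndFDerivAt (by simp [minSmoothness_of_isRCLikeNormedField]) _ _

lemma pderiv_iterate_pderiv_comm (hU : IsOpen U) (hf : ContDiffOn ℝ ∞ f U) (i j : Fin d)
    (n : ℕ) : EqOn (pderiv i ((pderiv j)^[n] f)) ((pderiv j)^[n] (pderiv i f)) U := by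
  induction n with
  | zero => exact fun _ _ => rfl
  | succ n ih =>
    intro x hx
    have hC2 : ContDiffAt ℝ 2 ((pderiv j)^[n] f) x :=
      ((hf.iterate_pderiv_of_isOpen hU j n).contDiffAt (hU.mem_nhds hx)).of_le (by norm_cast)
    simp only [Function.iterate_succ_apply']
    rw [pderiv_pderiv_comm hC2]
    exact ih.pderiv_of_isOpen hU j hx

lemma pderiv_const_mul (hf : DifferentiableAt ℝ f x) (a : ℝ) (i : Fin d) :
    pderiv i (fun y => a * f y) x = a * pderiv i f x := by
  simp [pderiv, fderiv_const_mul hf]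

lemma pderiv_mul (hf : DifferentiableAt ℝ f x) (hg : DifferentiableAt ℝ g x) (i : Fin d) :
    pderiv i (fun y => f y * g y) x = pderiv i f x * g x + f x * pderiv i g x := by
  simp only [pderiv, fderiv_fun_mul hf hg, add_apply, smul_apply, smul_eq_mul]
  ring

lemma pderiv_sum {ι : Type*} {s : Finset ι} {F : ι → E → ℝ}
    (hF : ∀ β ∈ s, DifferentiableAt ℝ (F β) x) (i : Fin d) :
    pderiv i (fun y => ∑ β ∈ s, F β y) x = ∑ β ∈ s, pderiv i (F β) x := by
  simp [pderiv, fderiv_fun_sum hF]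

end PartialDerivatives

section MultiPderiv

variable {g : EuclideanSpace ℝ (Fin d) → ℝ} {U : Set (EuclideanSpace ℝ (Fin d))}

lemma ContDiffOn.foldr_iterate_pderiv_of_isOpen (hU : IsOpen U) (hg : ContDiffOn ℝ ∞ g U)
    (β : Fin d → ℕ) (l : List (Fin d)) :
    ContDiffOn ℝ ∞ (l.foldr (fun i h => (pderiv i)^[β i] h) g) U := by
  induction l with
  | nil => exact hg
  | cons a l ih => exact ih.iterate_pderiv_of_isOpen hU a (β a)

/- `∂_i` commutes past the factors `∂_a^{β a}`, `a ≠ i`, until it meets `∂_i^{β i}`. -/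
lemma pderiv_foldr_iterate_pderiv (hU : IsOpen U) (hg : ContDiffOn ℝ ∞ g U) (β : Fin d → ℕ)
    {i : Fin d} {l : List (Fin d)} (hl : l.Nodup) (hi : i ∈ l) :
    EqOn (pderiv i (l.foldr (fun j h => (pderiv j)^[β j] h) g))
      (l.foldr (fun j h => (pderiv j)^[(β + Pi.single i 1 : Fin d → ℕ) j] h) g) U := by
  induction l with
  | nil => simp at hi
  | cons a l ih =>
    obtain ⟨ha, hl⟩ := List.nodup_cons.1 hl
    by_cases hai : a = i
    · subst hai
      have hfold : l.foldr (fun j h => (pderiv j)^[(β + Pi.single a 1 : Fin d → ℕ) j] h) g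
          = l.foldr (fun j h => (pderiv j)^[β j] h) g :=
        List.foldr_ext _ _ _ fun j hj _ => by
          rw [Pi.add_apply, Pi.single_eq_of_ne (ne_of_mem_of_not_mem hj ha), add_zero]
      intro x _
      rw [List.foldr_cons, List.foldr_cons, hfold, Pi.add_apply, Pi.single_eq_same,
        Function.iterate_succ_apply']
    · have hi' : i ∈ l := (List.mem_cons.1 hi).resolve_left (Ne.symm hai)
      intro x hx
      simp only [List.foldr_cons, Pi.add_apply, Pi.single_eq_of_ne hai, add_zero]
      rw [pderiv_iterate_pderiv_comm hU (hg.foldr_iterate_pderiv_of_isOpen hU β l) i a (β a) hx]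
      exact (ih hl hi').iterate_pderiv_of_isOpen hU a (β a) hx

lemma ContDiffOn.multiPderiv_of_isOpen (hU : IsOpen U) (hg : ContDiffOn ℝ ∞ g U)
    (β : Fin d → ℕ) : ContDiffOn ℝ ∞ (multiPderiv β g) U :=
  hg.foldr_iterate_pderiv_of_isOpen hU β _

lemma pderiv_multiPderiv (hU : IsOpen U) (hg : ContDiffOn ℝ ∞ g U) (β : Fin d → ℕ)
    (i : Fin d) :
    EqOn (pderiv i (multiPderiv β g)) (multiPderiv (β + Pi.single i 1) g) U :=
  pderiv_foldr_iterate_pderiv hU hg β (List.nodup_finRange d) (List.mem_finRange i)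

lemma multiPderiv_zero (g : EuclideanSpace ℝ (Fin d) → ℝ) : multiPderiv 0 g = g :=
  List.foldr_ext _ _ _ (fun _ _ _ => rfl) |>.trans (List.foldr_fixed' (fun _ => rfl) _)

end MultiPderiv

section DerivSpan

variable {U : Set (EuclideanSpace ℝ (Fin d))} {f g : EuclideanSpace ℝ (Fin d) → ℝ}

def derivSpan (U : Set E) (g : E → ℝ) : Submodule ℝ (E → ℝ) where
  carrier := {f | ∃ c : (Fin d → ℕ) →₀ ℝ, ∀ x ∈ U,
    f x = c.sum fun β a => a * multiPderiv β g x}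
  zero_mem' := ⟨0, fun x _ => by simp⟩
  add_mem' := by
    rintro f₁ f₂ ⟨c₁, h₁⟩ ⟨c₂, h₂⟩
    refine ⟨c₁ + c₂, fun x hx => ?_⟩
    rw [Pi.add_apply, h₁ x hx, h₂ x hx, Finsupp.sum_add_index' (fun _ => zero_mul _)
      fun _ _ _ => add_mul _ _ _]
  smul_mem' := by
    rintro a f ⟨c, h⟩
    refine ⟨a • c, fun x hx => ?_⟩
    rw [Pi.smul_apply, h x hx, Finsupp.sum_smul_index (fun _ => zero_mul _), smul_eq_mul,
      Finsupp.mul_sum]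
    simp only [mul_assoc]

lemma derivSpan_mem_of_eqOn {f' : E → ℝ} (hf : f ∈ derivSpan U g) (h : EqOn f f' U) :
    f' ∈ derivSpan U g :=
  let ⟨c, hc⟩ := hf
  ⟨c, fun x hx => (h hx).symm.trans (hc x hx)⟩

lemma self_mem_derivSpan : g ∈ derivSpan U g :=
  ⟨Finsupp.single 0 1, fun x _ => by simp [multiPderiv_zero]⟩

lemma pderiv_mem_derivSpan (hU : IsOpen U) (hg : ContDiffOn ℝ ∞ g U) (hf : f ∈ derivSpan U g)
    (i : Fin d) : pderiv i f ∈ derivSpan U g := by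
  obtain ⟨c, hc⟩ := hf
  refine ⟨c.mapDomain (· + Pi.single i 1), fun x hx => ?_⟩
  have hdiff (β : Fin d → ℕ) : DifferentiableAt ℝ (multiPderiv β g) x :=
    ((hg.multiPderiv_of_isOpen hU β).differentiableOn (by simp)).differentiableAt
      (hU.mem_nhds hx)
  rw [Finsupp.sum_mapDomain_index_inj (add_left_injective _),
    (Set.EqOn.pderiv_of_isOpen hU hc i) hx]
  simp only [Finsupp.sum]
  rw [pderiv_sum fun β _ => (hdiff β).const_mul _]
  refine Finset.sum_congr rfl fun β _ => ?_
  rw [pderiv_const_mul (hdiff β), pderiv_multiPderiv hU hg β i hx]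

end DerivSpan

section NormRpow

variable {F : Type*} [NormedAddCommGroup F] [InnerProductSpace ℝ F]

lemma contDiffOn_norm_rpow (t : ℝ) : ContDiffOn ℝ ∞ (fun y : F => ‖y‖ ^ t) {0}ᶜ :=
  fun _ hx => ((contDiffAt_norm ℝ hx).rpow_const_of_ne (norm_ne_zero_iff.2 hx)).contDiffWithinAt

lemma hasFDerivAt_norm_rpow_of_ne_zero (t : ℝ) {x : F} (hx : x ≠ 0) :
    HasFDerivAt (fun y : F => ‖y‖ ^ t) ((t * ‖x‖ ^ (t - 2)) • innerSL ℝ x) x := by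
  have hsq (s : ℝ) (y : F) : (‖y‖ ^ 2) ^ (s / 2) = ‖y‖ ^ s := by
    rw [← Real.rpow_natCast, ← Real.rpow_mul (norm_nonneg y)]
    ring_nf
  have h := (hasStrictFDerivAt_norm_sq x).hasFDerivAt.rpow_const (p := t / 2)
    (Or.inl (by positivity))
  simp only [hsq] at h
  convert h using 1
  rw [show t / 2 - 1 = (t - 2) / 2 by ring, hsq, two_smul, smul_add, ← add_smul]
  ring_nf

end NormRpow

section MonomialNormRpow

variable {x : EuclideanSpace ℝ (Fin d)}

lemma pderiv_norm_rpow (t : ℝ) (hx : x ≠ 0) (i : Fin d) :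
    pderiv i (fun y : E => ‖y‖ ^ t) x = t * x i * ‖x‖ ^ (t - 2) := by
  rw [(hasFDerivAt_norm_rpow_of_ne_zero t hx).pderiv_eq]
  simp only [smul_apply, coe_innerSL_apply, EuclideanSpace.inner_single_right, Real.ringHom_apply,
    one_mul, smul_eq_mul]
  ring

lemma pderiv_monomial (m : Fin d →₀ ℕ) (x : E) (i : Fin d) :
    pderiv i (fun y : E => ∏ j, y j ^ m j) x
      = m i * ∏ j, x j ^ (m - Finsupp.single i 1 : Fin d →₀ ℕ) j := by
  have h : HasFDerivAt (fun y : E => ∏ j, y j ^ m j)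
      (∑ j, (∏ l ∈ univ.erase j, x l ^ m l) •
        ((m j * x j ^ (m j - 1)) • (EuclideanSpace.proj j : E →L[ℝ] ℝ))) x :=
    HasFDerivAt.finsetProd fun j _ => (hasDerivAt_pow (m j) (x j)).comp_hasFDerivAt x
      (EuclideanSpace.proj j : E →L[ℝ] ℝ).hasFDerivAt
  have herase : ∏ j ∈ univ.erase i, x j ^ (m - Finsupp.single i 1 : Fin d →₀ ℕ) j
      = ∏ j ∈ univ.erase i, x j ^ m j :=
    prod_congr rfl fun j hj => by
      rw [Finsupp.tsub_apply, Finsupp.single_eq_of_ne (ne_of_mem_erase hj), Nat.sub_zero]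
  rw [h.pderiv_eq, ← Finset.mul_prod_erase univ _ (mem_univ i), herase]
  simp only [_root_.sum_apply, smul_apply, PiLp.proj_apply, PiLp.single_apply, smul_eq_mul,
    mul_ite, mul_one, mul_zero, sum_ite_eq', mem_univ, ↓reduceIte, Finsupp.coe_tsub,
    Pi.sub_apply, Finsupp.single_eq_same]
  ring

noncomputable def monomialNormRpow (m : Fin d →₀ ℕ) (t : ℝ) : E → ℝ :=
  fun x => (∏ j, x j ^ m j) * ‖x‖ ^ t

lemma monomialNormRpow_zero (t : ℝ) :
    monomialNormRpow (0 : Fin d →₀ ℕ) t = fun x => ‖x‖ ^ t := by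
  funext x
  simp [monomialNormRpow]

lemma prod_pow_single (x : E) (i : Fin d) (k : ℕ) :
    ∏ j, x j ^ (Finsupp.single i k) j = x i ^ k := by
  rw [← Finsupp.prod_pow, Finsupp.prod_single_index (h := fun j k => x j ^ k) (pow_zero _)]

lemma prod_pow_add_single (m : Fin d →₀ ℕ) (x : E) (i : Fin d) :
    ∏ j, x j ^ (m + Finsupp.single i 1 : Fin d →₀ ℕ) j = x i * ∏ j, x j ^ m j := by
  simp only [Finsupp.coe_add, Pi.add_apply, pow_add, prod_mul_distrib, prod_pow_single, pow_one,
    mul_comm]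

lemma differentiableAt_monomialNormRpow (m : Fin d →₀ ℕ) (t : ℝ) (hx : x ≠ 0) :
    DifferentiableAt ℝ (monomialNormRpow m t) x :=
  (by fun_prop : DifferentiableAt ℝ (fun y : E => ∏ j, y j ^ m j) x).mul
    (hasFDerivAt_norm_rpow_of_ne_zero t hx).differentiableAt

/- `m - single i 1` is truncated, which is harmless: when `m i = 0` its coefficient vanishes. -/
lemma pderiv_monomialNormRpow (m : Fin d →₀ ℕ) (t : ℝ) (hx : x ≠ 0) (i : Fin d) :
    pderiv i (monomialNormRpow m t) x = m i * monomialNormRpow (m - Finsupp.single i 1) t x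
      + t * monomialNormRpow (m + Finsupp.single i 1) (t - 2) x := by
  change pderiv i (fun y => (∏ j, y j ^ m j) * ‖y‖ ^ t) x = _
  rw [pderiv_mul (by fun_prop) (hasFDerivAt_norm_rpow_of_ne_zero t hx).differentiableAt,
    pderiv_monomial, pderiv_norm_rpow t hx]
  simp only [monomialNormRpow, prod_pow_add_single]
  ring

lemma sum_pderiv_pderiv_norm_rpow (t : ℝ) (hx : x ≠ 0) :
    ∑ i, pderiv i (pderiv i (fun y : E => ‖y‖ ^ t)) x
      = t * (t + d - 2) * ‖x‖ ^ (t - 2) := by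
  have hfirst (i : Fin d) : EqOn (pderiv i (fun y : E => ‖y‖ ^ t))
      (fun y => t * monomialNormRpow (Finsupp.single i 1) (t - 2) y) {0}ᶜ := fun y hy => by
    simp [← monomialNormRpow_zero, pderiv_monomialNormRpow _ _ hy]
  have hsecond (i : Fin d) : pderiv i (pderiv i (fun y : E => ‖y‖ ^ t)) x
      = t * (‖x‖ ^ (t - 2) + (t - 2) * (x i ^ 2 * ‖x‖ ^ (t - 2 - 2))) := by
    rw [(hfirst i).pderiv_of_isOpen isOpen_compl_singleton i hx,
      pderiv_const_mul (differentiableAt_monomialNormRpow _ _ hx),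
      pderiv_monomialNormRpow _ _ hx, tsub_self, ← Finsupp.single_add]
    simp [monomialNormRpow, prod_pow_single]
  have hnorm : ‖x‖ ^ 2 * ‖x‖ ^ (t - 2 - 2) = ‖x‖ ^ (t - 2) := by
    rw [← Real.rpow_natCast, ← Real.rpow_add (norm_pos_iff.2 hx)]
    ring_nf
  simp only [hsecond, mul_add, sum_add_distrib, ← mul_sum, ← sum_mul, sum_const, card_univ,
    Fintype.card_fin, nsmul_eq_mul, ← EuclideanSpace.real_norm_sq_eq]
  linear_combination t * (t - 2) * hnorm

lemma prod_kelvin_pow_mul_norm_rpow (m : Fin d →₀ ℕ) (α : ℝ) (hx : x ≠ 0) :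
    (∏ i, (x i * (‖x‖ ^ 2)⁻¹) ^ m i) * ‖x‖ ^ (-α)
      = monomialNormRpow m (-(α + 2 * m.degree)) x := by
  have hpow : ((‖x‖ ^ 2)⁻¹) ^ m.degree * ‖x‖ ^ (-α)
      = ‖x‖ ^ (-(α + 2 * m.degree)) := by
    rw [neg_add, Real.rpow_add (norm_pos_iff.2 hx), mul_comm, inv_pow, ← pow_mul,
      ← Real.rpow_natCast, ← Real.rpow_neg (norm_nonneg x)]
    push_cast
    ring_nf
  rw [monomialNormRpow, ← hpow, Finsupp.degree_eq_sum, ← prod_pow_eq_pow_sum]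
  simp only [mul_pow, prod_mul_distrib]
  ring

end MonomialNormRpow

section KernelDerivatives

variable {g : EuclideanSpace ℝ (Fin d) → ℝ}

lemma norm_rpow_sub_two_mem_derivSpan (hg : ContDiffOn ℝ ∞ g {0}ᶜ) {t : ℝ}
    (ht : t * (t + d - 2) ≠ 0) (h : (fun y : E => ‖y‖ ^ t) ∈ derivSpan {0}ᶜ g) :
    (fun y : E => ‖y‖ ^ (t - 2)) ∈ derivSpan {0}ᶜ g := by
  have hlap : ∑ i, pderiv i (pderiv i (fun y : E => ‖y‖ ^ t)) ∈ derivSpan {0}ᶜ g :=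
    Submodule.sum_mem _ fun i _ => pderiv_mem_derivSpan isOpen_compl_singleton hg
      (pderiv_mem_derivSpan isOpen_compl_singleton hg h i) i
  refine derivSpan_mem_of_eqOn (Submodule.smul_mem _ (t * (t + d - 2))⁻¹ hlap) fun x hx => ?_
  rw [Pi.smul_apply, Finset.sum_apply, sum_pderiv_pderiv_norm_rpow t hx, smul_eq_mul,
    ← mul_assoc, inv_mul_cancel₀ ht, one_mul]

lemma monomialNormRpow_add_single_mem_derivSpan (hg : ContDiffOn ℝ ∞ g {0}ᶜ)
    {m : Fin d →₀ ℕ} {t : ℝ} (ht : t ≠ 0) (i : Fin d)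
    (h : monomialNormRpow m t ∈ derivSpan {0}ᶜ g)
    (h' : monomialNormRpow (m - Finsupp.single i 1) t ∈ derivSpan {0}ᶜ g) :
    monomialNormRpow (m + Finsupp.single i 1) (t - 2) ∈ derivSpan {0}ᶜ g := by
  have hcomb := Submodule.smul_mem _ t⁻¹ <| Submodule.sub_mem _
    (pderiv_mem_derivSpan isOpen_compl_singleton hg h i) (Submodule.smul_mem _ (m i : ℝ) h')
  refine derivSpan_mem_of_eqOn hcomb fun x hx => ?_
  simp only [Pi.smul_apply, Pi.sub_apply, smul_eq_mul, pderiv_monomialNormRpow m t hx i]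
  field_simp
  ring

lemma monomialNormRpow_mem_derivSpan_norm_rpow {α : ℝ} (hA : ∀ k : ℕ, α + 2 * k ≠ 0)
    (hB : ∀ k : ℕ, α + 2 * k + 2 - d ≠ 0) (k : ℕ) {m : Fin d →₀ ℕ}
    (hm : m.degree ≤ k) :
    monomialNormRpow m (-(α + 2 * k)) ∈ derivSpan {0}ᶜ (fun y : E => ‖y‖ ^ (-α)) := by
  have hg := contDiffOn_norm_rpow (F := E) (-α)
  induction k generalizing m with
  | zero =>
    obtain rfl : m = 0 := (Finsupp.degree_eq_zero_iff m).1 (Nat.le_zero.1 hm)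
    simpa [monomialNormRpow_zero] using self_mem_derivSpan
  | succ k ih =>
    have hexp : -(α + 2 * k) - 2 = -(α + 2 * ↑(k + 1)) := by push_cast; ring
    rw [← hexp]
    rcases eq_or_ne m 0 with rfl | hm0
    · rw [monomialNormRpow_zero]
      refine norm_rpow_sub_two_mem_derivSpan hg (mul_ne_zero (neg_ne_zero.2 (hA k)) fun h =>
        hB k (by linarith)) ?_
      simpa [monomialNormRpow_zero] using ih (m := 0) (by simp)
    · obtain ⟨i, hi⟩ : ∃ i, m i ≠ 0 := by simpa [Finsupp.ext_iff] using hm0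
      have hsplit : m - Finsupp.single i 1 + Finsupp.single i 1 = m :=
        tsub_add_cancel_of_le (Finsupp.single_le_iff.2 (Nat.one_le_iff_ne_zero.2 hi))
      have hdeg : (m - Finsupp.single i 1).degree ≤ k := by
        have := congrArg Finsupp.degree hsplit
        rw [map_add, Finsupp.degree_single] at this
        omega
      rw [← hsplit]
      exact monomialNormRpow_add_single_mem_derivSpan hg (neg_ne_zero.2 (hA k)) i (ih hdeg)
        (ih ((Finsupp.degree_mono tsub_le_self).trans hdeg))

end KernelDerivatives

/-- Lemma 2 (generating polynomials): for `d ≥ 2` and `α > d − 2` or `α ∉ ℤ`, every product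
`p(K(x))·|x|^{-α}` (with `K(x) = x|x|^{-2}` the Kelvin transform and `p` a polynomial) is a
finite real-linear combination of iterated partial derivatives of the kernel `x ↦ |x|^{-α}`
on `ℝᵈ \ {0}`. -/
theorem polynomial_times_kernel_is_combination_of_derivatives
    (d : ℕ) (hd : 2 ≤ d) (α : ℝ)
    (hα : (d : ℝ) - 2 < α ∨ ∀ n : ℤ, α ≠ (n : ℝ))
    (p : MvPolynomial (Fin d) ℝ) :
    ∃ (s : Finset (Fin d → ℕ)) (c : (Fin d → ℕ) → ℝ),
      ∀ x : EuclideanSpace ℝ (Fin d), x ≠ 0 →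
        MvPolynomial.eval (fun i => x i * (‖x‖ ^ 2)⁻¹) p * ‖x‖ ^ (-α)
          = ∑ β ∈ s, c β *
              multiPderiv β (fun y : EuclideanSpace ℝ (Fin d) => ‖y‖ ^ (-α)) x := by
  have hd' : (2 : ℝ) ≤ d := by exact_mod_cast hd
  have hA : ∀ k : ℕ, α + 2 * k ≠ 0 := fun k h => by
    rcases hα with hα | hα
    · linarith [k.cast_nonneg (α := ℝ)]
    · exact hα (-(2 * k)) (by push_cast; linarith)
  have hB : ∀ k : ℕ, α + 2 * k + 2 - d ≠ 0 := fun k h => by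
    rcases hα with hα | hα
    · linarith [k.cast_nonneg (α := ℝ)]
    · exact hα (d - 2 - 2 * k) (by push_cast; linarith)
  obtain ⟨c, hc⟩ : ∑ m ∈ p.support,
      MvPolynomial.coeff m p • monomialNormRpow m (-(α + 2 * m.degree))
      ∈ derivSpan {0}ᶜ (fun y : EuclideanSpace ℝ (Fin d) => ‖y‖ ^ (-α)) :=
    Submodule.sum_mem _ fun m _ => Submodule.smul_mem _ _
      (monomialNormRpow_mem_derivSpan_norm_rpow hA hB _ le_rfl)
  refine ⟨c.support, c, fun x hx => Eq.trans ?_ (hc x hx)⟩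
  rw [MvPolynomial.eval_eq', sum_mul]
  simp only [Finset.sum_apply, Pi.smul_apply, smul_eq_mul, mul_assoc,
    prod_kelvin_pow_mul_norm_rpow _ _ hx]
end

section
/- For every m ∈ ℕ, the ratio ((n − 2m − 1)!! · n!!) / ((n − 2m)!! · (n − 1)!!) tends to 1 as n → ∞ along even integers n > 2m. -/
/-!
Writing `u n = n‼ / (n - 1)‼`, the ratio at `n = 2j` is `u (2j) / u (2j - 2m)`, a telescoping
product of `m` consecutive quotients `u (k + 2) / u k = (k + 2) / (k + 1)`, each tending to `1`.
-/

open Filter Nat Topology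

theorem tendsto_div_add_mul_of_tendsto_div_add {K : Type*} [DivisionRing K] [TopologicalSpace K]
    [ContinuousMul K] {u : ℕ → K} {k : ℕ} (hu : ∀ n, u n ≠ 0)
    (h : Tendsto (fun n => u (n + k) / u n) atTop (𝓝 1)) (m : ℕ) :
    Tendsto (fun n => u (n + m * k) / u n) atTop (𝓝 1) := by
  induction m with
  | zero => simpa [hu] using tendsto_const_nhds
  | succ m ih =>
    have hlast : Tendsto (fun n => u (n + m * k + k) / u (n + m * k)) atTop (𝓝 1) :=
      h.comp (tendsto_add_atTop_nat (m * k))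
    rw [← mul_one (1 : K)]
    refine (hlast.mul ih).congr fun n => ?_
    rw [div_mul_div_cancel₀ (hu _), add_mul, one_mul, add_assoc]

theorem doubleFactorial_div_doubleFactorial_sub_one_add_two (n : ℕ) :
    (((n + 2)‼ : ℝ) / (n + 1)‼) / ((n‼ : ℝ) / (n - 1)‼) = (n + 2) / (n + 1) := by
  have hn : (n‼ : ℝ) ≠ 0 := by positivity
  have hn' : ((n - 1)‼ : ℝ) ≠ 0 := by positivity
  rw [doubleFactorial_add_two, doubleFactorial_add_one]
  push_cast
  field_simp

theorem tendsto_doubleFactorial_div_doubleFactorial_sub_one_add_two :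
    Tendsto (fun n : ℕ => (((n + 2)‼ : ℝ) / (n + 1)‼) / ((n‼ : ℝ) / (n - 1)‼)) atTop (𝓝 1) := by
  simp_rw [doubleFactorial_div_doubleFactorial_sub_one_add_two]
  simpa [add_comm] using tendsto_add_mul_div_add_mul_atTop_nhds (2 : ℝ) 1 1 one_ne_zero

/-- For every `m ∈ ℕ`, the ratio `((n − 2m − 1)‼ · n‼) / ((n − 2m)‼ · (n − 1)‼)` tends to `1`
as `n → ∞` along even integers `n = 2j > 2m`. -/
theorem doubleFactorial_ratio_tendsto_one (m : ℕ) :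
    Tendsto
      (fun j : ℕ =>
        (((2 * j - 2 * m - 1)‼ * (2 * j)‼ : ℕ) : ℝ) /
          (((2 * j - 2 * m)‼ * (2 * j - 1)‼ : ℕ) : ℝ))
      atTop (nhds 1) := by
  set u : ℕ → ℝ := fun n => (n‼ : ℝ) / (n - 1)‼
  have hu : ∀ n, u n ≠ 0 := fun n => by positivity
  have h := (tendsto_div_add_mul_of_tendsto_div_add hu
    tendsto_doubleFactorial_div_doubleFactorial_sub_one_add_two m).comp
    (tendsto_id.const_mul_atTop' two_pos)
  rw [← tendsto_add_atTop_iff_nat m]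
  refine h.congr fun i => ?_
  simp only [Function.comp, id, u, mul_add, mul_comm m 2, Nat.add_sub_cancel]
  push_cast
  field_simp
end
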